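/- Let V be a finite-dimensional complex vector space equipped with a quaternionic structure j. Then there exist a natural number n and a ℂ-basis of V indexed by Fin n ⊕ Fin n, say (v₁,…,vₙ, w₁,…,wₙ), such that wᵢ = j(vᵢ) for every i. (In particular every quaternionic vector space is equivalent to the standard model (ℍⁿ, j₀).) -/

import Mathlib

open Module Submodule

universe u

theorem quat_aux : ∀ (N : ℕ) (V : Type u) [instA : AddCommGroup V] [instM : Module ℂ V]
    [instF : FiniteDimensional ℂ V] (j : V → V),
    (∀ v w : V, j (v + w) = j v + j w) →
    (∀ (a : ℂ) (v : V), j (a • v) = (starRingEnd ℂ a) • j v) →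
    (∀ v : V, j (j v) = -v) →
    Module.finrank ℂ V = N →
    ∃ (n : ℕ) (b : Basis (Fin n ⊕ Fin n) ℂ V),
      ∀ i : Fin n, b (Sum.inr i) = j (b (Sum.inl i)) := by
  intro N
  induction N using Nat.strong_induction_on with
  | _ N IH =>
  intro V instA instM instF j hadd hsmul hsq hN
  have hj0 : j 0 = 0 := by
    have h := hadd 0 0
    simp only [add_zero] at h
    exact add_eq_left.mp h.symm
  have hneg : ∀ v : V, j (-v) = -(j v) := by
    intro v
    have h := hsmul (-1) v
    simpa using h
  have hsub : ∀ v w : V, j (v - w) = j v - j w := by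
    intro v w
    rw [sub_eq_add_neg, hadd, hneg, sub_eq_add_neg]
  rcases Nat.eq_zero_or_pos N with h0 | hpos
  · subst h0
    have : Subsingleton V := finrank_zero_iff.mp hN
    exact ⟨0, Basis.empty V, fun i => i.elim0⟩
  · have : Nontrivial V := by
      rw [← Module.finrank_pos_iff (R := ℂ)]
      omega
    obtain ⟨v, hv⟩ := exists_ne (0 : V)
    have hjv : j v ≠ 0 := by
      intro h
      apply hv
      have h2 := hsq v
      rw [h, hj0] at h2
      simpa using h2.symm
    -- v and j v are linearly independent
    have hli : LinearIndependent ℂ ![v, j v] := by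
      rw [linearIndependent_fin2]
      refine ⟨by simpa using hjv, fun a ha => ?_⟩
      simp only [Matrix.cons_val_one, Matrix.head_cons, Matrix.cons_val_zero] at ha
      have h2 : j (a • j v) = j v := by rw [ha]
      rw [hsmul, hsq, smul_neg] at h2
      have h3 : (1 + starRingEnd ℂ a * a) • j v = 0 := by
        rw [add_smul, one_smul, mul_smul, ha, ← neg_eq_iff_eq_neg.mpr h2.symm]
        abel
      have h4 : (1 + starRingEnd ℂ a * a) = 0 := by
        rcases smul_eq_zero.mp h3 with h | h
        · exact h
        · exact absurd h hjv
      have h5 := congrArg Complex.re h4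
      simp [Complex.add_re, Complex.mul_re, Complex.conj_re, Complex.conj_im] at h5
      nlinarith [sq_nonneg a.re, sq_nonneg a.im]
    set g : Fin 2 → V := ![v, j v] with hg
    set W : Submodule ℂ V := Submodule.span ℂ (Set.range g) with hW
    have hvW : v ∈ W := Submodule.subset_span ⟨0, rfl⟩
    have hjvW : j v ∈ W := Submodule.subset_span ⟨1, rfl⟩
    have hWj : ∀ w ∈ W, j w ∈ W := by
      intro w hw
      induction hw using Submodule.span_induction with
      | mem x hx =>
        rcases hx with ⟨i, rfl⟩
        have hgi : g i = v ∨ g i = j v := by fin_cases i <;> simp [hg]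
        rcases hgi with h | h
        · rw [h]; exact hjvW
        · rw [h, hsq]; exact W.neg_mem hvW
      | zero => rw [hj0]; exact W.zero_mem
      | add x y _ _ hx hy => rw [hadd]; exact W.add_mem hx hy
      | smul a x _ hx => rw [hsmul]; exact W.smul_mem _ hx
    have hWrank : finrank ℂ W = 2 := by
      rw [hW, finrank_span_eq_card hli]
      simp
    obtain ⟨U, hU⟩ := Submodule.exists_isCompl W
    set πW : V →ₗ[ℂ] W := W.projectionOnto U hU with hπW
    set πU : V →ₗ[ℂ] U := U.projectionOnto W hU.symm with hπU
    have hdecomp : ∀ x : V, (πW x : V) + (πU x : V) = x :=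
      fun x => Submodule.projection_add_projection_eq_self hU x
    have hπU_left : ∀ x : U, πU (x : V) = x :=
      fun x => Submodule.projectionOnto_apply_left hU.symm x
    have hπU_W : ∀ x ∈ W, πU x = 0 :=
      fun x hx => Submodule.projectionOnto_apply_of_mem_right hU.symm hx
    set j' : U → U := fun u => πU (j (u : V)) with hj'
    have hadd' : ∀ u w : U, j' (u + w) = j' u + j' w := by
      intro u w
      simp only [hj', Submodule.coe_add, hadd, map_add]
    have hsmul' : ∀ (a : ℂ) (u : U), j' (a • u) = (starRingEnd ℂ a) • j' u := by
      intro a u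
      simp only [hj', Submodule.coe_smul, hsmul, map_smul]
    have hsq' : ∀ u : U, j' (j' u) = -u := by
      intro u
      have hx : ((πU (j (u : V)) : V)) = j (u : V) - (πW (j (u : V)) : V) := by
        rw [eq_sub_iff_add_eq, add_comm]
        exact hdecomp _
      simp only [hj']
      rw [hx, hsub, hsq]
      have h1 : πU (-(u : V)) = -u := by
        rw [← Submodule.coe_neg, hπU_left]
      have h2 : πU (j ((πW (j (u : V)) : V))) = 0 :=
        hπU_W _ (hWj _ (πW (j (u : V))).2)
      rw [map_sub, h1, h2, sub_zero]
    have hrank : finrank ℂ W + finrank ℂ U = finrank ℂ V :=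
      Submodule.finrank_add_eq_of_isCompl hU
    have hUlt : finrank ℂ U < N := by omega
    obtain ⟨m, bU, hbU⟩ := IH (finrank ℂ U) hUlt U j' hadd' hsmul' hsq' rfl
    set u : Fin m → V := fun i => (bU (Sum.inl i) : V) with hu
    set f : Fin (m+1) ⊕ Fin (m+1) → V :=
      Sum.elim (Fin.cons v u) (Fin.cons (j v) (fun i => j (u i))) with hf
    -- the span of f contains W
    have hWle : W ≤ Submodule.span ℂ (Set.range f) := by
      rw [hW, Submodule.span_le]
      rintro x ⟨i, rfl⟩
      have hgi : g i = v ∨ g i = j v := by fin_cases i <;> simp [hg]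
      rcases hgi with h | h
      · rw [h]; exact Submodule.subset_span ⟨Sum.inl 0, by simp [hf]⟩
      · rw [h]; exact Submodule.subset_span ⟨Sum.inr 0, by simp [hf]⟩
    have hUle : U ≤ Submodule.span ℂ (Set.range f) := by
      intro x hx
      have hxtop : (⟨x, hx⟩ : U) ∈ (⊤ : Submodule ℂ U) := trivial
      rw [← bU.span_eq] at hxtop
      have : ∀ y ∈ Submodule.span ℂ (Set.range bU), (y : V) ∈ Submodule.span ℂ (Set.range f) := by
        intro y hy
        induction hy using Submodule.span_induction with
        | mem z hz =>
          rcases hz with ⟨idx, rfl⟩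
          rcases idx with i | i
          · exact Submodule.subset_span ⟨Sum.inl i.succ, by simp [hf, hu, Fin.cons_succ]⟩
          · rw [hbU i]
            have hxU : ((πU (j (u i)) : V)) = j (u i) - (πW (j (u i)) : V) := by
              rw [eq_sub_iff_add_eq, add_comm]
              exact hdecomp _
            show ((j' (bU (Sum.inl i)) : V)) ∈ _
            simp only [hj']
            rw [hxU]
            refine Submodule.sub_mem _ ?_ (hWle (πW (j (u i))).2)
            exact Submodule.subset_span ⟨Sum.inr i.succ, by simp [hf, Fin.cons_succ]⟩
        | zero => simp
        | add z w _ _ hz hw => rw [Submodule.coe_add]; exact Submodule.add_mem _ hz hw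
        | smul a z _ hz => rw [Submodule.coe_smul]; exact Submodule.smul_mem _ _ hz
      exact this _ hxtop
    have hspan : ⊤ ≤ Submodule.span ℂ (Set.range f) := by
      rw [← hU.codisjoint.eq_top]
      exact sup_le hWle hUle
    have hUrank : finrank ℂ U = m + m := by
      rw [finrank_eq_card_basis bU]
      simp
    have hcard : Fintype.card (Fin (m+1) ⊕ Fin (m+1)) = finrank ℂ V := by
      simp only [Fintype.card_sum, Fintype.card_fin]
      omega
    refine ⟨m + 1, basisOfTopLeSpanOfCardEqFinrank f hspan hcard, fun i => ?_⟩
    simp only [coe_basisOfTopLeSpanOfCardEqFinrank]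
    induction i using Fin.cases with
    | zero => simp [hf]
    | succ k => simp [hf, Fin.cons_succ]

/-- Every finite-dimensional complex vector space with a quaternionic
structure `j` has a basis of the form `(v₁,…,vₙ, j v₁,…, j vₙ)`; in particular it is
equivalent to the standard model `(ℍⁿ, j₀)`. -/
theorem quaternionic_structure_standard_basis
    (V : Type*) [AddCommGroup V] [Module ℂ V] [FiniteDimensional ℂ V]
    (j : V → V)
    (hadd : ∀ v w : V, j (v + w) = j v + j w)
    (hsmul : ∀ (a : ℂ) (v : V), j (a • v) = (starRingEnd ℂ a) • j v)
    (hsq : ∀ v : V, j (j v) = -v) :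
    ∃ (n : ℕ) (b : Basis (Fin n ⊕ Fin n) ℂ V),
      ∀ i : Fin n, b (Sum.inr i) = j (b (Sum.inl i)) := by
  exact quat_aux (Module.finrank ℂ V) V j hadd hsmul hsq rfl
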